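/- Let Δ be a set of continuous derivations of the ring of arithmetic functions under Dirichlet convolution. An arithmetic function f lies in the common kernel of Δ if and only if Exp(f) lies in the common kernel of Δ. -/

import Mathlib

open ArithmeticFunction
open scoped Classical

/-- The embedding of `ℂ` into the Dirichlet ring of arithmetic functions,
sending `c` to the function with value `c` at `1` and `0` elsewhere. -/
noncomputable def CC : ℂ →+* ArithmeticFunction ℂ where
  toFun c := ⟨fun n => if n = 1 then c else 0, by simp⟩
  map_zero' := by ext n; simp
  map_one' := by ext n; simp [ArithmeticFunction.one_apply]
  map_add' a b := by ext n; by_cases h : n = 1 <;> erw [ArithmeticFunction.add_apply] <;> simp [h]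
  map_mul' a b := by
    ext n
    erw [ArithmeticFunction.mul_apply]
    by_cases h : n = 1
    · subst h
      rw [show Nat.divisorsAntidiagonal 1 = {(1,1)} from rfl]
      simp
    · rw [Finset.sum_eq_zero]
      · simp [h]
      · rintro ⟨d, e⟩ hde
        rw [Nat.mem_divisorsAntidiagonal] at hde
        rcases Decidable.eq_or_ne d 1 with hd | hd
        · have : e ≠ 1 := by rintro rfl; exact h (by simp [← hde.1, hd])
          simp [this]
        · simp [hd]

/-- The order `v f` of an arithmetic function: the least element of the support
(`sInf` of the empty set is `0` for `f = 0`; that case is always excluded by hypotheses). -/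
noncomputable def ordN (f : ArithmeticFunction ℂ) : ℕ := sInf {n : ℕ | f n ≠ 0}

/-- The order as an extended natural number, `⊤` for `f = 0`. -/
noncomputable def ordE (f : ArithmeticFunction ℂ) : ℕ∞ :=
  sInf ((fun n : ℕ => (n : ℕ∞)) '' {n : ℕ | f n ≠ 0})

/-- The norm `‖f‖ = 1/v(f)`, with `1/∞ = 0`. -/
noncomputable def nrm (f : ArithmeticFunction ℂ) : ℝ :=
  if f = 0 then 0 else 1 / (ordN f : ℝ)

/-- Extension of an arithmetic function to `ℝ`, vanishing off `ℕ`. -/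
noncomputable def extR (f : ArithmeticFunction ℂ) (x : ℝ) : ℂ :=
  if h : ∃ n : ℕ, (n : ℝ) = x then f h.choose else 0

/-- The exponential map `Exp f = exp(f 1) * ∑ (f - f 1)^k / k!` of the Dirichlet ring.
Since `(f - f 1)^k` has order `≥ 2^k`, the value of the infinite series at `n` equals the
value of the partial sum up to `k = n`. -/
noncomputable def ExpA (f : ArithmeticFunction ℂ) : ArithmeticFunction ℂ :=
  ⟨fun n => Complex.exp (f 1) *
      ((∑ k ∈ Finset.range (n + 1),
        CC ((Nat.factorial k : ℂ)⁻¹) * (f - CC (f 1)) ^ k) n), by simp⟩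

/-- The `p`-basic derivation `(∂_p f) n = v_p (n p) • f (n p)`. -/
noncomputable def DP (p : ℕ) (f : ArithmeticFunction ℂ) : ArithmeticFunction ℂ :=
  ⟨fun n => (padicValNat p (n * p) : ℂ) * f (n * p), by simp⟩

/-- The log-derivation `(∂_L f) n = log n * f n`. -/
noncomputable def DL (f : ArithmeticFunction ℂ) : ArithmeticFunction ℂ :=
  ⟨fun n => (Real.log n : ℂ) * f n, by simp⟩

/-- The pointwise multiplication operator `𝔪_g`. -/
noncomputable def MG (g f : ArithmeticFunction ℂ) : ArithmeticFunction ℂ :=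
  ⟨fun n => g n * f n, by simp⟩

/-- Integer powers `𝔪_g^i` of the pointwise multiplication operator:
`(𝔪_g^i f) n = (g n)^i * f n`. -/
noncomputable def MGi (g : ArithmeticFunction ℂ) (i : ℤ) (f : ArithmeticFunction ℂ) :
    ArithmeticFunction ℂ := ⟨fun n => g n ^ i * f n, by simp⟩

/-- `D` is a (ℂ-linear) derivation of the ring of arithmetic functions
under Dirichlet convolution. -/
def IsDerivationA (D : ArithmeticFunction ℂ → ArithmeticFunction ℂ) : Prop :=
  (∀ f g, D (f + g) = D f + D g) ∧
  (∀ (c : ℂ) (f), D (CC c * f) = CC c * D f) ∧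
  (∀ f g, D (f * g) = D f * g + f * D g)

/-- Convergence of a sequence of arithmetic functions in the norm topology. -/
def TendstoA (s : ℕ → ArithmeticFunction ℂ) (l : ArithmeticFunction ℂ) : Prop :=
  Filter.Tendsto (fun m => nrm (s m - l)) Filter.atTop (nhds 0)

/-- (Sequential) continuity of a map in the norm topology, which for this
ultrametric is equivalent to continuity. -/
def ContinuousA (D : ArithmeticFunction ℂ → ArithmeticFunction ℂ) : Prop :=
  ∀ (s : ℕ → ArithmeticFunction ℂ) (l), TendstoA s l → TendstoA (fun m => D (s m)) (D l)

/-- The indicator function `e_m` of the singleton `{m}`. -/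
noncomputable def En (m : ℕ) : ArithmeticFunction ℂ :=
  ⟨fun n => if 0 < n ∧ n = m then 1 else 0, by simp⟩

/-- The constant one arithmetic function `𝟙`. -/
noncomputable def OneA : ArithmeticFunction ℂ := ⟨fun n => if n = 0 then 0 else 1, by simp⟩

/-- The ℂ-algebra structure of the ring of arithmetic functions, via `CC`. -/
noncomputable instance : Algebra ℂ (ArithmeticFunction ℂ) := CC.toAlgebra

/-!
Every continuous derivation `D` satisfies `D (Exp f) = Exp f * D f`. Write `Exp f = exp (f 1) * S`
with `S = Σ g ^ k / k!` and `g = f - f 1`. The partial sums `S_m` satisfy `D S_{m+1} = S_m * D g`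
by the Leibniz rule, and they converge to `S` because `g ^ k` vanishes below `2 ^ k`; continuity
of `D` passes the identity to the limit, and `D g = D f`. Since `(Exp f) 1 = exp (f 1) ≠ 0`,
`Exp f` is a unit of the Dirichlet ring, so `D (Exp f) = 0 ↔ D f = 0`.
-/

namespace ArithmeticFunction

variable {R : Type*}

instance [Zero R] : IsZeroApply (ArithmeticFunction R) ℕ R := ⟨fun _ => rfl⟩

instance [AddMonoid R] : IsAddApply (ArithmeticFunction R) ℕ R := ⟨fun _ _ _ => rfl⟩

instance [AddGroup R] : IsSubApply (ArithmeticFunction R) ℕ R :=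
  ⟨fun f g n => by rw [sub_eq_add_neg, add_apply, neg_apply, sub_eq_add_neg]⟩

theorem mul_apply_eq_zero_of_forall_le [Semiring R] {f : ArithmeticFunction R}
    (g : ArithmeticFunction R) {m : ℕ} (hf : ∀ n ≤ m, f n = 0) {n : ℕ} (hn : n ≤ m) :
    (f * g) n = 0 := by
  rw [mul_apply]
  refine Finset.sum_eq_zero fun ⟨d, e⟩ hde => ?_
  rw [Nat.mem_divisorsAntidiagonal] at hde
  have hdn : d ≤ n := Nat.le_of_dvd (Nat.pos_of_ne_zero hde.2) ⟨e, hde.1.symm⟩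
  rw [hf d (hdn.trans hn), zero_mul]

theorem pow_apply_eq_zero_of_lt_two_pow [Semiring R] {g : ArithmeticFunction R} (hg : g 1 = 0) :
    ∀ {k n : ℕ}, n < 2 ^ k → (g ^ k) n = 0
  | 0, n, hn => by
    rw [pow_zero, one_apply_ne (by omega)]
  | k + 1, n, hn => by
    rw [pow_succ, mul_apply]
    refine Finset.sum_eq_zero fun ⟨d, e⟩ hde => ?_
    rw [Nat.mem_divisorsAntidiagonal] at hde
    obtain hd | hd := lt_or_ge d (2 ^ k)
    · rw [pow_apply_eq_zero_of_lt_two_pow hg hd, zero_mul]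
    · have he : e = 1 := by
        have hlt : d * e < d * 2 :=
          hde.1 ▸ hn.trans_le (by rw [pow_succ]; exact Nat.mul_le_mul_right 2 hd)
        have he0 : e ≠ 0 := by rintro rfl; exact hde.2 (by simpa using hde.1.symm)
        have he2 : e < 2 := Nat.lt_of_mul_lt_mul_left hlt
        omega
      rw [he, hg, mul_zero]

end ArithmeticFunction

theorem CC_apply (c : ℂ) (n : ℕ) : CC c n = if n = 1 then c else 0 := rfl

theorem CC_mul_apply (c : ℂ) (f : ArithmeticFunction ℂ) (n : ℕ) : (CC c * f) n = c * f n := by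
  rcases Nat.eq_zero_or_pos n with rfl | hn
  · simp
  rw [mul_apply, Finset.sum_eq_single (1, n)]
  · rw [CC_apply, if_pos rfl]
  · rintro ⟨d, e⟩ hde hne
    rw [Nat.mem_divisorsAntidiagonal] at hde
    have hd : d ≠ 1 := by rintro rfl; simp_all
    rw [CC_apply, if_neg hd, zero_mul]
  · exact fun h => (h (Nat.mem_divisorsAntidiagonal.mpr ⟨one_mul n, hn.ne'⟩)).elim

theorem sub_CC_apply_one (f : ArithmeticFunction ℂ) : (f - CC (f 1)) 1 = 0 := by
  rw [sub_apply, CC_apply, if_pos rfl, sub_self]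

theorem le_ordN_iff {f : ArithmeticFunction ℂ} (hf : f ≠ 0) (m : ℕ) :
    m ≤ ordN f ↔ ∀ n < m, f n = 0 := by
  have hne : {n : ℕ | f n ≠ 0}.Nonempty := by
    by_contra! h
    exact hf (ext fun n => by simpa using Set.eq_empty_iff_forall_notMem.mp h n)
  refine ⟨fun hm n hn => ?_, fun h => ?_⟩
  · simpa using Nat.notMem_of_lt_sInf (s := {n : ℕ | f n ≠ 0}) (hn.trans_le hm)
  · by_contra! hlt
    exact Nat.sInf_mem hne (h _ hlt)

theorem nrm_nonneg (f : ArithmeticFunction ℂ) : 0 ≤ nrm f := by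
  unfold nrm
  split_ifs <;> positivity

theorem nrm_le_one_div_iff (f : ArithmeticFunction ℂ) (m : ℕ) :
    nrm f ≤ 1 / (m + 1 : ℝ) ↔ ∀ n ≤ m, f n = 0 := by
  by_cases hf : f = 0
  · simp only [hf, nrm, if_true, ArithmeticFunction.zero_apply, implies_true, iff_true]
    positivity
  have hpos : 0 < ordN f := (le_ordN_iff hf 1).mpr fun n hn => by
    rw [Nat.lt_one_iff.mp hn, f.map_zero]
  rw [nrm, if_neg hf, one_div_le_one_div (by exact_mod_cast hpos) (by positivity)]
  simp only [← Nat.lt_succ_iff]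
  exact_mod_cast le_ordN_iff hf (m + 1)

theorem tendstoA_iff (s : ℕ → ArithmeticFunction ℂ) (l : ArithmeticFunction ℂ) :
    TendstoA s l ↔ ∀ m, ∀ᶠ k in Filter.atTop, ∀ n ≤ m, s k n = l n := by
  have hnrm (k m : ℕ) : (∀ n ≤ m, s k n = l n) ↔ nrm (s k - l) ≤ 1 / (m + 1 : ℝ) := by
    simp only [nrm_le_one_div_iff, sub_apply, sub_eq_zero]
  simp only [hnrm, TendstoA, tendsto_order]
  refine ⟨fun h m => (h.2 _ (by positivity)).mono fun k hk => hk.le,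
    fun h => ⟨fun ε hε => .of_forall fun k => hε.trans_le (nrm_nonneg _), fun ε hε => ?_⟩⟩
  obtain ⟨m, hm⟩ := exists_nat_one_div_lt hε
  exact (h m).mono fun k hk => hk.trans_lt hm

theorem tendstoA_of_forall_le {s : ℕ → ArithmeticFunction ℂ} {l : ArithmeticFunction ℂ}
    (h : ∀ k, ∀ n ≤ k, s k n = l n) : TendstoA s l :=
  (tendstoA_iff s l).mpr fun m =>
    (Filter.eventually_ge_atTop m).mono fun k hk n hn => h k n (hn.trans hk)

theorem TendstoA.unique {s : ℕ → ArithmeticFunction ℂ} {l l' : ArithmeticFunction ℂ}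
    (h : TendstoA s l) (h' : TendstoA s l') : l = l' := by
  ext n
  obtain ⟨k, hk, hk'⟩ := (((tendstoA_iff s l).mp h n).and ((tendstoA_iff s l').mp h' n)).exists
  rw [← hk n le_rfl, hk' n le_rfl]

theorem TendstoA.mul_const {s : ℕ → ArithmeticFunction ℂ} {l : ArithmeticFunction ℂ}
    (h : TendstoA s l) (c : ArithmeticFunction ℂ) : TendstoA (fun k => s k * c) (l * c) := by
  rw [tendstoA_iff] at h ⊢
  refine fun m => (h m).mono fun k hk n hn => ?_
  rw [← sub_eq_zero, ← sub_apply, ← sub_mul]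
  exact mul_apply_eq_zero_of_forall_le c (fun n hn => by rw [sub_apply, hk n hn, sub_self]) hn

section Derivation

variable {D : ArithmeticFunction ℂ → ArithmeticFunction ℂ}

def IsDerivationA.toAddMonoidHom (hD : IsDerivationA D) :
    ArithmeticFunction ℂ →+ ArithmeticFunction ℂ :=
  AddMonoidHom.mk' D hD.1

theorem IsDerivationA.map_one (hD : IsDerivationA D) : D 1 = 0 := by
  simpa using hD.2.2 1 1

theorem IsDerivationA.map_CC (hD : IsDerivationA D) (c : ℂ) : D (CC c) = 0 := by
  simpa [hD.map_one] using hD.2.1 c 1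

theorem IsDerivationA.map_sum (hD : IsDerivationA D) {ι : Type*} (s : Finset ι)
    (F : ι → ArithmeticFunction ℂ) : D (∑ i ∈ s, F i) = ∑ i ∈ s, D (F i) :=
  _root_.map_sum hD.toAddMonoidHom F s

theorem IsDerivationA.map_sub_CC (hD : IsDerivationA D) (f : ArithmeticFunction ℂ) (c : ℂ) :
    D (f - CC c) = D f := by
  change hD.toAddMonoidHom (f - CC c) = D f
  rw [map_sub, IsDerivationA.toAddMonoidHom, AddMonoidHom.mk'_apply, hD.map_CC, sub_zero]

theorem IsDerivationA.map_pow_succ (hD : IsDerivationA D) (g : ArithmeticFunction ℂ) (k : ℕ) :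
    D (g ^ (k + 1)) = CC (k + 1) * g ^ k * D g := by
  induction k with
  | zero => simp
  | succ k ih =>
    rw [pow_succ, hD.2.2, ih, Nat.cast_succ, map_add CC ((k : ℂ) + 1) 1, _root_.map_one CC]
    ring

open Nat in
noncomputable def expPartialSum (g : ArithmeticFunction ℂ) (m : ℕ) : ArithmeticFunction ℂ :=
  ∑ k ∈ Finset.range (m + 1), CC ((k ! : ℂ)⁻¹) * g ^ k

theorem ExpA_apply (f : ArithmeticFunction ℂ) (n : ℕ) :
    ExpA f n = Complex.exp (f 1) * expPartialSum (f - CC (f 1)) n n := rfl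

theorem IsDerivationA.map_expPartialSum_succ (hD : IsDerivationA D) (g : ArithmeticFunction ℂ)
    (m : ℕ) :
    D (expPartialSum g (m + 1)) = expPartialSum g m * D g := by
  rw [expPartialSum, Finset.sum_range_succ', hD.1, hD.map_sum, pow_zero, mul_one,
    hD.map_CC, add_zero, expPartialSum, Finset.sum_mul]
  refine Finset.sum_congr rfl fun k _ => ?_
  have hfact : ((k + 1).factorial : ℂ)⁻¹ * (k + 1) = (k.factorial : ℂ)⁻¹ := by
    rw [Nat.factorial_succ, Nat.cast_mul, Nat.cast_succ, mul_inv, mul_comm, ← mul_assoc,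
      mul_inv_cancel₀ (Nat.cast_add_one_ne_zero k), one_mul]
  rw [hD.2.1, hD.map_pow_succ, ← mul_assoc, ← mul_assoc, ← map_mul, hfact]

theorem expPartialSum_apply_of_le {g : ArithmeticFunction ℂ} (hg : g 1 = 0) {m n : ℕ}
    (hn : n ≤ m) : expPartialSum g m n = expPartialSum g n n := by
  rw [expPartialSum, expPartialSum, sum_apply, sum_apply]
  refine (Finset.sum_subset (Finset.range_subset_range.mpr (by omega)) fun k _ hk => ?_).symm
  have hnk : n < 2 ^ k := by
    rw [Finset.mem_range, not_lt] at hk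
    exact (Nat.lt_of_succ_le hk).trans Nat.lt_two_pow_self
  rw [CC_mul_apply, pow_apply_eq_zero_of_lt_two_pow hg hnk, mul_zero]

theorem tendstoA_CC_mul_expPartialSum (f : ArithmeticFunction ℂ) :
    TendstoA (fun m => CC (Complex.exp (f 1)) * expPartialSum (f - CC (f 1)) m) (ExpA f) :=
  tendstoA_of_forall_le fun _ _ hn => by
    rw [CC_mul_apply, expPartialSum_apply_of_le (sub_CC_apply_one f) hn, ExpA_apply]

theorem ExpA_apply_one (f : ArithmeticFunction ℂ) : ExpA f 1 = Complex.exp (f 1) := by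
  rw [ExpA_apply, expPartialSum, sum_apply, Finset.sum_range_succ, Finset.sum_range_one,
    CC_mul_apply, CC_mul_apply, pow_one, sub_CC_apply_one]
  simp

theorem isUnit_ExpA (f : ArithmeticFunction ℂ) : IsUnit (ExpA f) :=
  isUnit_iff_isUnit_apply_one.mpr <| ExpA_apply_one f ▸ (Complex.exp_ne_zero _).isUnit

theorem IsDerivationA.map_ExpA (hD : IsDerivationA D) (hC : ContinuousA D)
    (f : ArithmeticFunction ℂ) : D (ExpA f) = ExpA f * D f := by
  set c := CC (Complex.exp (f 1))
  set g := f - CC (f 1)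
  have hlim := tendstoA_CC_mul_expPartialSum f
  have hlim_succ : TendstoA (fun m => c * expPartialSum g (m + 1)) (ExpA f) :=
    hlim.comp (Filter.tendsto_add_atTop_nat 1)
  have hD_lim : TendstoA (fun m => c * expPartialSum g m * D f) (D (ExpA f)) := by
    convert hC _ _ hlim_succ using 2 with m
    rw [hD.2.1, hD.map_expPartialSum_succ, hD.map_sub_CC, mul_assoc]
  exact ((hlim.mul_const (D f)).unique hD_lim).symm

end Derivation

/-- For a set `Δ` of continuous derivations, `f ∈ ker Δ` iff `Exp f ∈ ker Δ`. -/
theorem stmt5 (Δ : Set (ArithmeticFunction ℂ → ArithmeticFunction ℂ))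
    (hΔ : ∀ D ∈ Δ, IsDerivationA D ∧ ContinuousA D) (f : ArithmeticFunction ℂ) :
    (∀ D ∈ Δ, D f = 0) ↔ (∀ D ∈ Δ, D (ExpA f) = 0) :=
  forall₂_congr fun D hD => by
    rw [(hΔ D hD).1.map_ExpA (hΔ D hD).2, (isUnit_ExpA f).mul_right_eq_zero]
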